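/- Let w_i, w_j be vectors in R^d with c ≤ ‖w_i‖ ≤ ‖w_j‖ ≤ 1 and ‖w_j − w_i‖ ≥ c for some constant c ∈ (0,1). For a constant K > 0 define v_i = K·w_i/(c²‖w_i‖²) and v_j = K·w_j/(c²‖w_j‖²). Then ‖v_i − v_j‖ ≥ K/c. -/

import Mathlib

/-!
Up to the common factor `K / c²`, `w ↦ w / ‖w‖²` is inversion in the unit sphere, which
scales distances by `1 / (‖wᵢ‖ ‖wⱼ‖)`. Since both norms are at most `1` and `‖wⱼ - wᵢ‖ ≥ c`,
the images are at distance at least `(K / c²) · c = K / c`.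
-/

theorem norm_div_norm_sq_smul_sub {F : Type*} [NormedAddCommGroup F] [InnerProductSpace ℝ F]
    {x y : F} (hx : x ≠ 0) (hy : y ≠ 0) (a : ℝ) :
    ‖(a / ‖x‖ ^ 2) • x - (a / ‖y‖ ^ 2) • y‖ = |a| / (‖x‖ * ‖y‖) * ‖x - y‖ := by
  have hinv : ∀ z : F, (a / ‖z‖ ^ 2) • z = a • ((1 / ‖z‖) ^ 2 • z) := fun z => by
    rw [smul_smul, div_pow, one_pow, mul_one_div]
  rw [hinv, hinv, ← smul_sub, norm_smul, ← dist_eq_norm, dist_div_norm_sq_smul hx hy,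
    dist_eq_norm, Real.norm_eq_abs]
  ring

theorem stmt_0_general (d : ℕ) (wi wj : EuclideanSpace ℝ (Fin d))
    (c K : ℝ) (hc : 0 < c) (hK : 0 < K)
    (h1 : c ≤ ‖wi‖) (h2 : ‖wi‖ ≤ ‖wj‖) (h3 : ‖wj‖ ≤ 1)
    (hsep : c ≤ ‖wj - wi‖) :
    K / c ≤ ‖(K / (c ^ 2 * ‖wi‖ ^ 2)) • wi - (K / (c ^ 2 * ‖wj‖ ^ 2)) • wj‖ := by
  have hwi : 0 < ‖wi‖ := hc.trans_le h1
  have hwj : 0 < ‖wj‖ := hwi.trans_le h2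
  have hprod : ‖wi‖ * ‖wj‖ ≤ 1 := mul_le_one₀ (h2.trans h3) hwj.le h3
  simp_rw [← div_div]
  rw [norm_div_norm_sq_smul_sub (norm_pos_iff.1 hwi) (norm_pos_iff.1 hwj), norm_sub_rev,
    abs_of_pos (by positivity)]
  calc K / c = K / c ^ 2 / 1 * c := by field_simp
    _ ≤ K / c ^ 2 / (‖wi‖ * ‖wj‖) * ‖wj - wi‖ := by gcongr

theorem stmt_0 (d : ℕ) (hd : 1 ≤ d) (wi wj : EuclideanSpace ℝ (Fin d))
    (c K : ℝ) (hc : 0 < c) (hc1 : c < 1) (hK : 0 < K)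
    (h1 : c ≤ ‖wi‖) (h2 : ‖wi‖ ≤ ‖wj‖) (h3 : ‖wj‖ ≤ 1)
    (hsep : c ≤ ‖wj - wi‖) :
    K / c ≤ ‖(K / (c ^ 2 * ‖wi‖ ^ 2)) • wi - (K / (c ^ 2 * ‖wj‖ ^ 2)) • wj‖ :=
  stmt_0_general d wi wj c K hc hK h1 h2 h3 hsep
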